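/- Let k be a field, Z a commutative k-algebra, V a Z-module, and ν : V → ℕ a function with the property that for every nonzero φ ∈ V there exists a finitely generated ideal I(φ) of Z with Z/I(φ) finite-dimensional over k, such that ν(yφ) < ν(φ) for every y ∈ I(φ) whenever ν(φ) > 0, and such that ν(φ) = 0 implies Z·φ is finite-dimensional over k. Then Z·φ is finite-dimensional over k for every φ ∈ V. -/
import Mathlib

open Submodule

private lemma fbi_restrictScalars_sup {k Z V : Type*} [Field k] [CommRing Z] [Algebra k Z]
    [AddCommGroup V] [Module Z V] [Module k V] [IsScalarTower k Z V]
    (p q : Submodule Z V) :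
    (p ⊔ q).restrictScalars k = p.restrictScalars k ⊔ q.restrictScalars k := by
  ext x
  simp [Submodule.mem_sup]

private lemma fbi_fd_finset_sup {k Z V : Type*} [Field k] [CommRing Z] [Algebra k Z]
    [AddCommGroup V] [Module Z V] [Module k V] [IsScalarTower k Z V]
    (s : Finset Z) (f : Z → Submodule Z V)
    (hf : ∀ y ∈ s, FiniteDimensional k ((f y).restrictScalars k)) :
    FiniteDimensional k ((s.sup f).restrictScalars k) := by
  classical
  induction s using Finset.cons_induction with
  | empty =>
      rw [Finset.sup_empty, Submodule.restrictScalars_bot]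
      infer_instance
  | cons a s ha ih =>
      rw [Finset.sup_cons, fbi_restrictScalars_sup]
      haveI := hf a (Finset.mem_cons_self a s)
      haveI := ih (fun y hy => hf y (Finset.mem_cons_of_mem hy))
      infer_instance

private lemma fbi_key {k Z V : Type*} [Field k] [CommRing Z] [Algebra k Z]
    [AddCommGroup V] [Module Z V] [Module k V] [IsScalarTower k Z V]
    (φ : V) (I : Ideal Z) (hFG : I.FG) (hfd : FiniteDimensional k (Z ⧸ I))
    (hy' : ∀ y ∈ I, FiniteDimensional k ((span Z {y • φ}).restrictScalars k)) :
    FiniteDimensional k ((span Z {φ}).restrictScalars k) := by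
  classical
  obtain ⟨s, hs⟩ := hFG
  set p := I.restrictScalars k with hp
  haveI : FiniteDimensional k (Z ⧸ p) :=
    LinearEquiv.finiteDimensional (Submodule.Quotient.restrictScalarsEquiv k I).symm
  obtain ⟨S, hS⟩ : (⊤ : Submodule k (Z ⧸ p)).FG := Module.Finite.fg_top
  have hsurj := p.mkQ_surjective
  let lift : (Z ⧸ p) → Z := fun q => (hsurj q).choose
  have hlift : ∀ q, p.mkQ (lift q) = q := fun q => (hsurj q).choose_spec
  let T : Finset Z := S.image lift
  have hT : Submodule.span k (T : Set Z) ⊔ p = ⊤ := by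
    have himg : p.mkQ '' (T : Set Z) = (S : Set (Z ⧸ p)) := by
      simp only [T, Finset.coe_image, Set.image_image]
      exact (Set.image_congr (fun q _ => hlift q)).trans (Set.image_id _)
    have hmap : Submodule.map p.mkQ (span k (T : Set Z)) = ⊤ := by
      rw [Submodule.map_span, himg, hS]
    have := Submodule.comap_map_eq p.mkQ (span k (T : Set Z))
    rw [hmap, Submodule.comap_top, Submodule.ker_mkQ] at this
    exact this.symm
  let f : Z →ₗ[k] V := (LinearMap.toSpanSingleton Z V φ).restrictScalars k
  let M : Submodule Z V := s.sup fun y => span Z {y • φ}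
  haveI hMfd : FiniteDimensional k (M.restrictScalars k) :=
    fbi_fd_finset_sup s _ (fun y hy =>
      hy' y (by rw [← hs]; exact Submodule.subset_span hy))
  haveI : FiniteDimensional k (span k (f '' (T : Set Z))) :=
    FiniteDimensional.span_of_finite k ((T : Set Z).toFinite.image f)
  let N : Submodule k V := span k (f '' (T : Set Z)) ⊔ M.restrictScalars k
  haveI : FiniteDimensional k N := by
    exact Submodule.finiteDimensional_sup _ _
  have hle : (span Z {φ}).restrictScalars k ≤ N := by
    intro x hx
    rw [Submodule.restrictScalars_mem, Submodule.mem_span_singleton] at hx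
    obtain ⟨z, rfl⟩ := hx
    have hz : z ∈ span k (T : Set Z) ⊔ p := hT ▸ Submodule.mem_top
    obtain ⟨c, hc, y, hyp, rfl⟩ := Submodule.mem_sup.mp hz
    rw [add_smul]
    apply Submodule.add_mem
    · apply Submodule.mem_sup_left
      have hm : f c ∈ Submodule.map f (span k (T : Set Z)) :=
        Submodule.mem_map_of_mem hc
      rw [Submodule.map_span] at hm
      exact hm
    · apply Submodule.mem_sup_right
      rw [Submodule.restrictScalars_mem]
      have hyI : y ∈ span Z (s : Set Z) := by
        have hyI' : y ∈ I := hyp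
        rw [← hs] at hyI'
        exact hyI'
      refine Submodule.span_induction
        (p := fun y _ => y • φ ∈ M) ?_ ?_ ?_ ?_ hyI
      · intro a ha
        exact (Finset.le_sup (f := fun y => span Z {y • φ}) ha)
          (Submodule.mem_span_singleton_self (a • φ))
      · simp
      · intro a b _ _ ha hb
        rw [add_smul]; exact M.add_mem ha hb
      · intro z' a _ ha
        rw [smul_assoc]; exact M.smul_mem z' ha
  exact Submodule.finiteDimensional_of_le hle

/-- Abstract induction scheme for `Z(𝔤)`-finiteness: if `ν : V → ℕ` is such
that every nonzero `φ` admits a finitely generated ideal `I(φ)` with `Z/I(φ)`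
finite-dimensional over `k`, with `ν(yφ) < ν(φ)` for all `y ∈ I(φ)` whenever
`ν(φ) > 0`, and `ν(φ) = 0` forces `Z·φ` finite-dimensional over `k`, then
`Z·φ` is finite-dimensional over `k` for every `φ`. -/
theorem finiteness_by_induction_on_constant_terms
    (k : Type*) [Field k] (Z : Type*) [CommRing Z] [Algebra k Z]
    (V : Type*) [AddCommGroup V] [Module Z V] [Module k V] [IsScalarTower k Z V]
    (ν : V → ℕ)
    (h : ∀ φ : V, φ ≠ 0 → ∃ I : Ideal Z, I.FG ∧ FiniteDimensional k (Z ⧸ I) ∧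
      (0 < ν φ → ∀ y ∈ I, ν (y • φ) < ν φ) ∧
      (ν φ = 0 → FiniteDimensional k ((Submodule.span Z {φ}).restrictScalars k))) :
    ∀ φ : V, FiniteDimensional k ((Submodule.span Z {φ}).restrictScalars k) := by
  suffices H : ∀ n : ℕ, ∀ φ : V, ν φ ≤ n →
      FiniteDimensional k ((Submodule.span Z {φ}).restrictScalars k) from
    fun φ => H (ν φ) φ le_rfl
  intro n
  induction n with
  | zero =>
      intro φ hφ
      by_cases h0 : φ = 0
      · subst h0
        rw [Submodule.span_zero_singleton, Submodule.restrictScalars_bot]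
        infer_instance
      · obtain ⟨I, _, _, _, hz⟩ := h φ h0
        exact hz (Nat.le_zero.mp hφ)
  | succ n ih =>
      intro φ hφ
      by_cases h0 : φ = 0
      · subst h0
        rw [Submodule.span_zero_singleton, Submodule.restrictScalars_bot]
        infer_instance
      · obtain ⟨I, hFG, hfd, hlt, hz⟩ := h φ h0
        rcases Nat.eq_zero_or_pos (ν φ) with hν | hν
        · exact hz hν
        · exact fbi_key φ I hFG hfd (fun y hy =>
            ih (y • φ) (Nat.lt_succ_iff.mp (lt_of_lt_of_le (hlt hν y hy) hφ)))
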